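/- arXiv:2103.03808 — 5 statements merged into one kernel-verified Lean document; each statement's English description precedes it below -/
import Mathlib

section
/- In the Kleinman iteration, the sequence of Lyapunov solutions is monotonically non-increasing: P_{i+1} ≼ P_i in the Loewner order, i.e., P_i − P_{i+1} is positive semi-definite, for all i ≥ 0. -/
open Matrix MeasureTheory Filter Topology intervalIntegral

attribute [local instance] Matrix.linftyOpNormedRing Matrix.linftyOpNormedAlgebra

noncomputable section

/-- A real square matrix is Hurwitz if all of its (complex) eigenvalues
have strictly negative real part. -/
def Hurwitz {n : ℕ} (A : Matrix (Fin n) (Fin n) ℝ) : Prop :=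
  ∀ μ ∈ spectrum ℂ (A.map Complex.ofReal), μ.re < 0

open NormedSpace

section KleinmanAux


variable {n : ℕ}

lemma coeff_decay {μ : ℂ} (hμ : μ.re < 0) (k : ℕ) :
    Tendsto (fun t : ℝ => Complex.exp ((t:ℂ) * μ) * (t:ℂ) ^ k) atTop (𝓝 0) := by
  rw [tendsto_zero_iff_norm_tendsto_zero]
  have hc : 0 < -μ.re := by linarith
  have h1 : Tendsto (fun t : ℝ => ((-μ.re)⁻¹) ^ k * (((-μ.re) * t) ^ k * Real.exp (-((-μ.re) * t))))
      atTop (𝓝 0) := by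
    have := (Real.tendsto_pow_mul_exp_neg_atTop_nhds_zero k).comp
      ((tendsto_atTop_atTop_of_monotone (fun a b hab => by nlinarith)
        (fun b => ⟨b / (-μ.re), by rw [mul_div_cancel₀]; exact hc.ne'⟩)) :
        Tendsto (fun t : ℝ => (-μ.re) * t) atTop atTop)
    simpa using this.const_mul (((-μ.re))⁻¹ ^ k)
  refine h1.congr' ?_
  filter_upwards [eventually_ge_atTop (0:ℝ)] with t ht
  rw [norm_mul, Complex.norm_exp, norm_pow, Complex.norm_real,
    Real.norm_eq_abs, abs_of_nonneg ht]
  have : ((t:ℂ) * μ).re = t * μ.re := by simp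
  rw [this, neg_mul, neg_neg]
  rw [show (-(μ.re*t)) = (-μ.re)*t by ring, mul_pow, ← mul_assoc, ← mul_assoc,
    ← mul_pow, inv_mul_cancel₀ hc.ne', one_pow, one_mul, mul_comm t μ.re, mul_comm]


/-- mulVec by a fixed vector, as a CLM in the matrix argument -/
def mulVecCLM (v : Fin n → ℂ) : Matrix (Fin n) (Fin n) ℂ →L[ℂ] (Fin n → ℂ) :=
  LinearMap.toContinuousLinearMap
    { toFun := fun M : Matrix (Fin n) (Fin n) ℂ => M *ᵥ v
      map_add' := fun M N => Matrix.add_mulVec M N v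
      map_smul' := fun c M => Matrix.smul_mulVec c M v }

lemma genEig_decay (G : Matrix (Fin n) (Fin n) ℂ) {μ : ℂ} (hμ : μ.re < 0)
    {v : Fin n → ℂ} {k : ℕ} (hv : ((G - μ • 1) ^ k) *ᵥ v = 0) :
    Tendsto (fun t : ℝ => exp ((t:ℂ) • G) *ᵥ v) atTop (𝓝 0) := by
  set N : Matrix (Fin n) (Fin n) ℂ := G - μ • 1 with hN
  have hsplit : ∀ t : ℝ, exp ((t:ℂ) • G) *ᵥ v
      = ∑ j ∈ Finset.range k, (Complex.exp ((t:ℂ) * μ) * ((t:ℂ) ^ j * (Nat.factorial j : ℂ)⁻¹)) • (N ^ j *ᵥ v) := by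
    intro t
    have hG : (t:ℂ) • G = ((t:ℂ) * μ) • (1 : Matrix (Fin n) (Fin n) ℂ) + (t:ℂ) • N := by
      rw [hN]; rw [smul_sub, smul_smul]; ring_nf; abel
    have hcomm : Commute (((t:ℂ) * μ) • (1 : Matrix (Fin n) (Fin n) ℂ)) ((t:ℂ) • N) :=
      (Commute.one_left _).smul_left _
    rw [hG, Matrix.exp_add_of_commute _ _ hcomm]
    have h1 : exp (((t:ℂ) * μ) • (1 : Matrix (Fin n) (Fin n) ℂ))
        = Complex.exp ((t:ℂ) * μ) • 1 := by
      rw [← Algebra.algebraMap_eq_smul_one, ← Algebra.algebraMap_eq_smul_one,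
        Complex.exp_eq_exp_ℂ]
      exact (algebraMap_exp_comm _).symm
    have h2 : exp ((t:ℂ) • N) *ᵥ v
        = ∑ j ∈ Finset.range k, ((t:ℂ) ^ j * (Nat.factorial j : ℂ)⁻¹) • (N ^ j *ᵥ v) := by
      have hker : ∀ j, k ≤ j → N ^ j *ᵥ v = 0 := by
        intro j hj
        rw [show j = (j - k) + k by omega, pow_add, ← Matrix.mulVec_mulVec, hv,
          Matrix.mulVec_zero]
      have hmap := (mulVecCLM v).map_tsum (expSeries_summable' (𝕂 := ℂ) ((t:ℂ) • N))
      rw [exp_eq_tsum ℂ]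
      show mulVecCLM v _ = _
      rw [hmap, tsum_eq_sum (s := Finset.range k)]
      · refine Finset.sum_congr rfl fun j _ => ?_
        show ((Nat.factorial j : ℂ)⁻¹ • ((t:ℂ) • N) ^ j) *ᵥ v = _
        rw [smul_pow, smul_smul, Matrix.smul_mulVec]
        ring_nf
      · intro j hj
        show ((Nat.factorial j : ℂ)⁻¹ • ((t:ℂ) • N) ^ j) *ᵥ v = 0
        rw [smul_pow, smul_smul, Matrix.smul_mulVec, hker j (by simpa using hj),
          smul_zero]
    rw [h1, smul_mul_assoc, one_mul, Matrix.smul_mulVec, h2, Finset.smul_sum]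
    exact Finset.sum_congr rfl fun j _ => by rw [smul_smul]
  rw [show (0 : Fin n → ℂ)
      = ∑ j ∈ Finset.range k, (0 : ℂ) • (N ^ j *ᵥ v) by simp]
  refine Tendsto.congr (fun t => (hsplit t).symm) (tendsto_finset_sum _ fun j _ => ?_)
  have hc : Tendsto (fun t : ℝ => Complex.exp ((t:ℂ) * μ) * ((t:ℂ) ^ j * (Nat.factorial j : ℂ)⁻¹))
      atTop (𝓝 0) := by
    have := (coeff_decay hμ j).mul_const ((Nat.factorial j : ℂ)⁻¹)
    simpa [mul_assoc] using this
  exact hc.smul_const _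

lemma decay_complex (G : Matrix (Fin n) (Fin n) ℂ)
    (h : ∀ μ ∈ spectrum ℂ G, μ.re < 0) (v : Fin n → ℂ) :
    Tendsto (fun t : ℝ => exp ((t:ℂ) • G) *ᵥ v) atTop (𝓝 0) := by
  set f : Module.End ℂ (Fin n → ℂ) := Matrix.toLinAlgEquiv' G with hf
  let S : Submodule ℂ (Fin n → ℂ) :=
    { carrier := {w | Tendsto (fun t : ℝ => exp ((t:ℂ) • G) *ᵥ w) atTop (𝓝 0)}
      add_mem' := fun ha hb => by simpa [Matrix.mulVec_add] using ha.add hb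
      zero_mem' := by simpa [Matrix.mulVec_zero] using tendsto_const_nhds
      smul_mem' := fun c a ha => by
        simpa [Matrix.mulVec_smul] using ha.const_smul c }
  suffices hS : ∀ w, w ∈ S by exact hS v
  intro w
  have htop : w ∈ (⊤ : Submodule ℂ (Fin n → ℂ)) := trivial
  rw [← Module.End.iSup_maxGenEigenspace_eq_top f] at htop
  revert htop
  refine SetLike.le_def.mp (iSup_le fun μ => ?_) (x := w)
  intro x hx
  rcases (Module.End.mem_maxGenEigenspace f μ x).mp hx with ⟨k, hk⟩
  by_cases hx0 : x = 0
  · rw [hx0]; exact S.zero_mem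
  -- μ is an eigenvalue, hence in the spectrum of G
  have hμ : μ.re < 0 := by
    apply h
    rw [← AlgEquiv.spectrum_eq (Matrix.toLinAlgEquiv' (R := ℂ) (n := Fin n)) G, ← hf]
    refine Module.End.HasEigenvalue.mem_spectrum ?_
    refine Module.End.hasEigenvalue_of_hasGenEigenvalue (k := k) ?_
    rw [Module.End.HasGenEigenvalue, Module.End.HasUnifEigenvalue, Submodule.ne_bot_iff]
    exact ⟨x, Module.End.mem_genEigenspace_nat.mpr hk, hx0⟩
  -- convert to matrix statement
  have hmk : ((G - μ • 1) ^ k) *ᵥ x = 0 := by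
    have he : (f - μ • 1) ^ k = Matrix.toLinAlgEquiv' ((G - μ • 1) ^ k) := by
      rw [map_pow, map_sub, _root_.map_smul, _root_.map_one, hf]
    rw [he] at hk
    rwa [Matrix.toLinAlgEquiv'_apply] at hk
  exact genEig_decay G hμ hmk

lemma decay_real (F : Matrix (Fin n) (Fin n) ℝ)
    (hH : ∀ μ ∈ spectrum ℂ (F.map Complex.ofReal), μ.re < 0) (v : Fin n → ℝ) :
    Tendsto (fun t : ℝ => exp (t • F) *ᵥ v) atTop (𝓝 0) := by
  set G := F.map Complex.ofReal with hG
  have hmap : ∀ t : ℝ, (exp (t • F)).map Complex.ofReal = exp ((t:ℂ) • G) := by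
    intro t
    have h1 : (Complex.ofRealHom.mapMatrix : Matrix (Fin n) (Fin n) ℝ →+* Matrix (Fin n) (Fin n) ℂ)
          (exp (t • F))
        = exp ((Complex.ofRealHom.mapMatrix : Matrix (Fin n) (Fin n) ℝ →+* _) (t • F)) :=
      map_exp _ (Continuous.matrix_map continuous_id Complex.continuous_ofReal) _
    have h0 : (exp (t • F)).map Complex.ofReal
        = Complex.ofRealHom.mapMatrix (exp (t • F)) := rfl
    rw [h0, h1]
    congr 1
    ext i j
    simp [hG, Matrix.map_apply, Complex.real_smul]
  have hcoord : ∀ t : ℝ, ∀ j, ((exp (t • F) *ᵥ v) j : ℂ)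
      = (exp ((t:ℂ) • G) *ᵥ (fun i => (v i : ℂ))) j := by
    intro t j
    rw [← hmap t]
    simp [Matrix.mulVec, dotProduct, Matrix.map_apply]
  rw [tendsto_pi_nhds]
  intro j
  have hc := (tendsto_pi_nhds.mp (decay_complex G hH (fun i => (v i : ℂ)))) j
  have := (Complex.continuous_re.tendsto 0).comp hc
  simp only [Function.comp_def, Complex.zero_re] at this
  refine this.congr fun t => ?_
  rw [← hcoord t j, Complex.ofReal_re]

section Lyap

variable (F : Matrix (Fin n) (Fin n) ℝ)

lemma eta_hasDerivAt (X : Matrix (Fin n) (Fin n) ℝ) (t : ℝ) :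
    HasDerivAt (fun s : ℝ => exp (s • Fᵀ) * X * exp (s • F))
      (exp (t • Fᵀ) * (Fᵀ * X + X * F) * exp (t • F)) t := by
  have h1 : HasDerivAt (fun s : ℝ => exp (s • Fᵀ)) (Fᵀ * exp (t • Fᵀ)) t :=
    hasDerivAt_exp_smul_const' Fᵀ t
  have h2 : HasDerivAt (fun s : ℝ => exp (s • F)) (exp (t • F) * F) t :=
    hasDerivAt_exp_smul_const F t
  have h3 := (h1.mul_const X).mul h2
  refine h3.congr_deriv ?_
  have hc1 : Fᵀ * exp (t • Fᵀ) = exp (t • Fᵀ) * Fᵀ :=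
    (((Commute.refl Fᵀ).smul_right t).exp_right).eq
  have hc2 : exp (t • F) * F = F * exp (t • F) :=
    (((Commute.refl F).smul_right t).exp_right).symm.eq
  rw [hc1, hc2]
  noncomm_ring

lemma psi_hasDerivAt (X : Matrix (Fin n) (Fin n) ℝ) (u v : Fin n → ℝ) (t : ℝ) :
    HasDerivAt (fun s : ℝ => u ⬝ᵥ ((exp (s • Fᵀ) * X * exp (s • F)) *ᵥ v))
      (u ⬝ᵥ ((exp (t • Fᵀ) * (Fᵀ * X + X * F) * exp (t • F)) *ᵥ v)) t := by
  let Λ : Matrix (Fin n) (Fin n) ℝ →ₗ[ℝ] ℝ :=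
    { toFun := fun Y => u ⬝ᵥ (Y *ᵥ v)
      map_add' := fun Y Z => by
        simp [Matrix.add_mulVec, dotProduct_add]
      map_smul' := fun c Y => by
        simp [Matrix.smul_mulVec, dotProduct_smul] }
  exact ((LinearMap.toContinuousLinearMap Λ).hasFDerivAt).comp_hasDerivAt t
    (eta_hasDerivAt F X t)

lemma form_eq (Y : Matrix (Fin n) (Fin n) ℝ) (u v : Fin n → ℝ) (t : ℝ) :
    u ⬝ᵥ ((exp (t • Fᵀ) * Y * exp (t • F)) *ᵥ v)
      = (exp (t • F) *ᵥ u) ⬝ᵥ (Y *ᵥ (exp (t • F) *ᵥ v)) := by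
  rw [show (t • Fᵀ) = (t • F)ᵀ by rw [Matrix.transpose_smul], Matrix.exp_transpose,
    ← Matrix.mulVec_mulVec, ← Matrix.mulVec_mulVec, Matrix.dotProduct_mulVec u,
    Matrix.vecMul_transpose]

lemma psi_tendsto (X : Matrix (Fin n) (Fin n) ℝ)
    (hD : ∀ w, Tendsto (fun t : ℝ => exp (t • F) *ᵥ w) atTop (𝓝 0)) (u v : Fin n → ℝ) :
    Tendsto (fun t : ℝ => u ⬝ᵥ ((exp (t • Fᵀ) * X * exp (t • F)) *ᵥ v)) atTop (𝓝 0) := by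
  have hXv : Tendsto (fun t : ℝ => X *ᵥ (exp (t • F) *ᵥ v)) atTop (𝓝 0) := by
    have hcont : Continuous fun y : Fin n → ℝ => X *ᵥ y :=
      (Matrix.mulVecLin X).continuous_of_finiteDimensional
    have h2 := (hcont.tendsto 0).comp (hD v)
    simpa [Function.comp_def, Matrix.mulVec_zero] using h2
  have hsum : Tendsto (fun t : ℝ =>
      ∑ j : Fin n, (exp (t • F) *ᵥ u) j * (X *ᵥ (exp (t • F) *ᵥ v)) j) atTop (𝓝 0) := by
    rw [show (0:ℝ) = ∑ _j : Fin n, (0:ℝ) by simp]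
    refine tendsto_finset_sum _ fun j _ => ?_
    simpa using (tendsto_pi_nhds.mp (hD u) j).mul (tendsto_pi_nhds.mp hXv j)
  refine hsum.congr fun t => ?_
  rw [form_eq]
  rfl

lemma lyap_zero {X : Matrix (Fin n) (Fin n) ℝ}
    (hD : ∀ w, Tendsto (fun t : ℝ => exp (t • F) *ᵥ w) atTop (𝓝 0))
    (hX : Fᵀ * X + X * F = 0) : X = 0 := by
  have hconst : ∀ u v : Fin n → ℝ, u ⬝ᵥ (X *ᵥ v) = 0 := by
    intro u v
    set ψ := fun s : ℝ => u ⬝ᵥ ((exp (s • Fᵀ) * X * exp (s • F)) *ᵥ v) with hψ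
    have hd : ∀ t : ℝ, HasDerivAt ψ 0 t := by
      intro t
      have := psi_hasDerivAt F X u v t
      rw [hX] at this
      simpa using this
    have h0 : ψ 0 = u ⬝ᵥ (X *ᵥ v) := by
      simp [hψ, zero_smul, exp_zero]
    have hlim : Tendsto ψ atTop (𝓝 0) := psi_tendsto F X hD u v
    have hlim' : Tendsto (fun _ : ℝ => ψ 0) atTop (𝓝 0) :=
      hlim.congr fun t => is_const_of_deriv_eq_zero
        (fun s => (hd s).differentiableAt) (fun s => (hd s).deriv) t 0
    rw [← h0]
    exact (tendsto_nhds_unique tendsto_const_nhds hlim')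
  ext i j
  have := hconst (Pi.single i 1) (Pi.single j 1)
  simpa [Matrix.mulVec_single, dotProduct, Pi.single_apply] using this

lemma lyap_psd {X M : Matrix (Fin n) (Fin n) ℝ}
    (hD : ∀ w, Tendsto (fun t : ℝ => exp (t • F) *ᵥ w) atTop (𝓝 0))
    (hEq : Fᵀ * X + X * F + M = 0) (hM : ∀ w, 0 ≤ w ⬝ᵥ (M *ᵥ w)) (v : Fin n → ℝ) :
    0 ≤ v ⬝ᵥ (X *ᵥ v) := by
  set ψ := fun s : ℝ => v ⬝ᵥ ((exp (s • Fᵀ) * X * exp (s • F)) *ᵥ v) with hψ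
  have hFX : Fᵀ * X + X * F = -M := eq_neg_of_add_eq_zero_left hEq
  have hd : ∀ t : ℝ, HasDerivAt ψ
      (-((exp (t • F) *ᵥ v) ⬝ᵥ (M *ᵥ (exp (t • F) *ᵥ v)))) t := by
    intro t
    have := psi_hasDerivAt F X v v t
    rw [hFX] at this
    have hval : v ⬝ᵥ ((exp (t • Fᵀ) * -M * exp (t • F)) *ᵥ v)
        = -((exp (t • F) *ᵥ v) ⬝ᵥ (M *ᵥ (exp (t • F) *ᵥ v))) := by
      rw [show exp (t • Fᵀ) * -M * exp (t • F)
          = -(exp (t • Fᵀ) * M * exp (t • F)) by noncomm_ring,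
        Matrix.neg_mulVec, dotProduct_neg, form_eq]
    rw [hval] at this
    exact this
  have hanti : Antitone ψ :=
    antitone_of_deriv_nonpos (fun s => (hd s).differentiableAt)
      (fun s => by rw [(hd s).deriv]; simpa using hM (exp (s • F) *ᵥ v))
  have hlim : Tendsto ψ atTop (𝓝 0) := psi_tendsto F X hD v v
  have h0 : ψ 0 = v ⬝ᵥ (X *ᵥ v) := by simp [hψ, zero_smul, exp_zero]
  rw [← h0]
  exact le_of_tendsto hlim (Filter.eventually_atTop.2 ⟨0, fun t ht => hanti ht⟩)

end Lyap

end KleinmanAux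

theorem kleinman_monotone {n m : ℕ}
    (A : Matrix (Fin n) (Fin n) ℝ) (B : Matrix (Fin n) (Fin m) ℝ)
    (Q : Matrix (Fin n) (Fin n) ℝ) (R : Matrix (Fin m) (Fin m) ℝ)
    (K : ℕ → Matrix (Fin m) (Fin n) ℝ) (P : ℕ → Matrix (Fin n) (Fin n) ℝ)
    (hQ : Q.PosSemidef) (hR : R.PosDef)
    (hHur : ∀ i, Hurwitz (A + B * K i))
    (hLyap : ∀ i, (A + B * K i)ᵀ * P i + P i * (A + B * K i) + Q + (K i)ᵀ * R * K i = 0)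
    (hKrec : ∀ i, K (i + 1) = -(R⁻¹ * Bᵀ * P i)) :
    ∀ i, (P i - P (i + 1)).PosSemidef := by
  have hRT : Rᵀ = R := by
    rw [← Matrix.conjTranspose_eq_transpose_of_trivial]; exact hR.1
  have hQT : Qᵀ = Q := by
    rw [← Matrix.conjTranspose_eq_transpose_of_trivial]; exact hQ.1
  have hD : ∀ i, ∀ w : Fin n → ℝ,
      Tendsto (fun t : ℝ => exp (t • (A + B * K i)) *ᵥ w) atTop (𝓝 0) :=
    fun i => decay_real _ (hHur i)
  have hRinv : R * R⁻¹ = 1 := Matrix.mul_nonsing_inv R hR.det_pos.ne'.isUnit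
  have hBP : ∀ i, Bᵀ * P i = -(R * K (i + 1)) := by
    intro i
    rw [hKrec i]
    have h1 : R * R⁻¹ * (Bᵀ * P i) = Bᵀ * P i := by rw [hRinv, Matrix.one_mul]
    calc Bᵀ * P i = R * R⁻¹ * (Bᵀ * P i) := h1.symm
      _ = -(R * -(R⁻¹ * Bᵀ * P i)) := by
          simp only [Matrix.mul_neg, neg_neg, Matrix.mul_assoc]
  have hPsym : ∀ i, (P i)ᵀ = P i := by
    intro i
    have h2 : (A + B * K i)ᵀ * (P i)ᵀ + (P i)ᵀ * (A + B * K i) + Q + (K i)ᵀ * R * K i = 0 := by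
      have hrw : (A + B * K i)ᵀ * (P i)ᵀ + (P i)ᵀ * (A + B * K i) + Q + (K i)ᵀ * R * K i
          = ((A + B * K i)ᵀ * P i + P i * (A + B * K i) + Q + (K i)ᵀ * R * K i)ᵀ := by
        simp only [Matrix.transpose_add, Matrix.transpose_mul, Matrix.transpose_transpose,
          hQT, hRT, Matrix.add_mul, Matrix.mul_add, Matrix.mul_assoc]
        abel
      rw [hrw, hLyap i, Matrix.transpose_zero]
    have hdiff : (A + B * K i)ᵀ * (P i - (P i)ᵀ) + (P i - (P i)ᵀ) * (A + B * K i)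
        = ((A + B * K i)ᵀ * P i + P i * (A + B * K i) + Q + (K i)ᵀ * R * K i)
          - ((A + B * K i)ᵀ * (P i)ᵀ + (P i)ᵀ * (A + B * K i) + Q + (K i)ᵀ * R * K i) := by
      simp only [Matrix.transpose_add, Matrix.transpose_mul, Matrix.add_mul, Matrix.mul_add,
        Matrix.sub_mul, Matrix.mul_sub, Matrix.mul_assoc]
      abel
    rw [hLyap i, h2, sub_zero] at hdiff
    have := lyap_zero (A + B * K i) (hD i) hdiff
    rw [sub_eq_zero] at this
    exact this.symm
  intro i
  have hPB : P i * B = -((K (i + 1))ᵀ * R) := by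
    have h := congrArg Matrix.transpose (hBP i)
    simp only [Matrix.transpose_mul, Matrix.transpose_neg, Matrix.transpose_transpose,
      hRT, hPsym i] at h
    exact h
  have key : (A + B * K (i+1))ᵀ * (P i - P (i+1)) + (P i - P (i+1)) * (A + B * K (i+1))
        + (K i - K (i+1))ᵀ * R * (K i - K (i+1))
      = ((A + B * K i)ᵀ * P i + P i * (A + B * K i) + Q + (K i)ᵀ * R * K i)
        - ((A + B * K (i+1))ᵀ * P (i+1) + P (i+1) * (A + B * K (i+1)) + Q + (K (i+1))ᵀ * R * K (i+1))
        - (K i - K (i+1))ᵀ * (Bᵀ * P i + R * K (i+1))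
        - (P i * B + (K (i+1))ᵀ * R) * (K i - K (i+1)) := by
    simp only [Matrix.transpose_add, Matrix.transpose_sub, Matrix.transpose_mul,
      Matrix.transpose_transpose, Matrix.add_mul, Matrix.mul_add, Matrix.sub_mul,
      Matrix.mul_sub, Matrix.mul_assoc]
    abel
  have heq : (A + B * K (i+1))ᵀ * (P i - P (i+1)) + (P i - P (i+1)) * (A + B * K (i+1))
      + (K i - K (i+1))ᵀ * R * (K i - K (i+1)) = 0 := by
    rw [key, hLyap i, hLyap (i+1), hBP i, hPB]
    simp
  have hM : ∀ w : Fin n → ℝ, 0 ≤ w ⬝ᵥ (((K i - K (i+1))ᵀ * R * (K i - K (i+1))) *ᵥ w) := by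
    intro w
    have hrw : w ⬝ᵥ (((K i - K (i+1))ᵀ * R * (K i - K (i+1))) *ᵥ w)
        = ((K i - K (i+1)) *ᵥ w) ⬝ᵥ (R *ᵥ ((K i - K (i+1)) *ᵥ w)) := by
      rw [← Matrix.mulVec_mulVec, ← Matrix.mulVec_mulVec, Matrix.dotProduct_mulVec w,
        Matrix.vecMul_transpose]
    rw [hrw]
    by_cases hw : (K i - K (i+1)) *ᵥ w = 0
    · simp [hw]
    · exact le_of_lt (by simpa using (Matrix.posDef_iff_dotProduct_mulVec.mp hR).2 hw)
  refine Matrix.PosSemidef.of_dotProduct_mulVec_nonneg ?_ fun x => ?_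
  · show (P i - P (i+1))ᴴ = _
    rw [Matrix.conjTranspose_eq_transpose_of_trivial, Matrix.transpose_sub, hPsym i,
      hPsym (i+1)]
  · simpa using lyap_psd (A + B * K (i+1)) (hD (i+1)) heq hM x
end
end

section
/- Converse Lyapunov direction: if there exist symmetric positive definite matrices P and M with Aᵀ P + P A + M = 0, then A is Hurwitz. -/
open Matrix MeasureTheory Filter Topology intervalIntegral

attribute [local instance] Matrix.linftyOpNormedRing Matrix.linftyOpNormedAlgebra

noncomputable section

/-- The complexification of a real positive definite matrix has positive
Hermitian form on nonzero complex vectors (real part). -/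
lemma aux_re_dotProduct_pos {n : ℕ} (P : Matrix (Fin n) (Fin n) ℝ) (hP : P.PosDef)
    (v : Fin n → ℂ) (hv : v ≠ 0) :
    0 < (star v ⬝ᵥ (P.map Complex.ofReal) *ᵥ v).re := by
  set a : Fin n → ℝ := fun i => (v i).re with ha
  set b : Fin n → ℝ := fun i => (v i).im with hb
  have key : (star v ⬝ᵥ (P.map Complex.ofReal) *ᵥ v).re = a ⬝ᵥ P *ᵥ a + b ⬝ᵥ P *ᵥ b := by
    simp only [dotProduct, mulVec, map_apply, Pi.star_apply, Finset.mul_sum]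
    rw [Complex.re_sum, ← Finset.sum_add_distrib]
    refine Finset.sum_congr rfl fun i _ => ?_
    rw [Complex.re_sum, ← Finset.sum_add_distrib]
    refine Finset.sum_congr rfl fun j _ => ?_
    simp only [Complex.mul_re, Complex.mul_im, Complex.ofReal_re, Complex.ofReal_im,
      RCLike.star_def, Complex.conj_re, Complex.conj_im, ha, hb]
    ring
  have hnn : ∀ x : Fin n → ℝ, 0 ≤ x ⬝ᵥ P *ᵥ x := by
    intro x
    rcases eq_or_ne x 0 with rfl | hx
    · simp
    · have := hP.dotProduct_mulVec_pos hx
      simpa using this.le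
  rw [key]
  have hab : a ≠ 0 ∨ b ≠ 0 := by
    by_contra hc
    push_neg at hc
    apply hv
    funext i
    have h1 : a i = 0 := by rw [hc.1]; rfl
    have h2 : b i = 0 := by rw [hc.2]; rfl
    exact Complex.ext h1 h2
  rcases hab with hx | hx
  · have := hP.dotProduct_mulVec_pos hx
    have h2 := hnn b
    simp only [star_trivial] at this
    linarith
  · have := hP.dotProduct_mulVec_pos hx
    have h2 := hnn a
    simp only [star_trivial] at this
    linarith

theorem converse_lyapunov_hurwitz {n : ℕ}
    (A P M : Matrix (Fin n) (Fin n) ℝ)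
    (hP : P.PosDef) (hM : M.PosDef)
    (h : Aᵀ * P + P * A + M = 0) :
    Hurwitz A := by
  intro μ hμ
  -- extract an eigenvector
  rw [← AlgEquiv.spectrum_eq (Matrix.toLinAlgEquiv' (R := ℂ) (n := Fin n)),
    ← Module.End.hasEigenvalue_iff_mem_spectrum] at hμ
  obtain ⟨v, hvv⟩ := hμ.exists_hasEigenvector
  have hv : v ≠ 0 := hvv.2
  have hBv : (A.map Complex.ofReal) *ᵥ v = μ • v := by
    have := hvv.apply_eq_smul
    simpa [Matrix.toLinAlgEquiv'_apply, Matrix.toLin'_apply] using this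
  set B := A.map Complex.ofReal with hB
  set Q := P.map Complex.ofReal with hQ
  set N := M.map Complex.ofReal with hN
  -- complexified Lyapunov equation
  have h2 : Bᵀ * Q + Q * B + N = 0 := by
    have := congrArg (fun X : Matrix (Fin n) (Fin n) ℝ =>
      X.map (Complex.ofRealHom : ℝ →+* ℂ)) h
    rw [Matrix.map_add _ (map_add _), Matrix.map_add _ (map_add _), Matrix.map_mul, Matrix.map_mul,
      Matrix.transpose_map] at this
    simpa [Matrix.map_mul, Matrix.map_add, Matrix.transpose_map, hB, hQ, hN,
      show (⇑Complex.ofRealHom : ℝ → ℂ) = Complex.ofReal from rfl] using this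
  have hstar : B *ᵥ star v = star (B *ᵥ v) := by
    funext i
    simp [hB, mulVec, dotProduct, map_sum, Complex.conj_ofReal]
  have hconj : B *ᵥ star v = (starRingEnd ℂ μ) • star v := by
    rw [hstar, hBv]
    funext i
    simp
  have e0 : star v ⬝ᵥ ((Bᵀ * Q + Q * B + N) *ᵥ v) = 0 := by rw [h2]; simp
  have t1 : star v ⬝ᵥ (Bᵀ * Q) *ᵥ v = (starRingEnd ℂ μ) * (star v ⬝ᵥ Q *ᵥ v) := by
    rw [← mulVec_mulVec, dotProduct_mulVec (star v) Bᵀ, vecMul_transpose, hconj]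
    simp [smul_dotProduct, smul_eq_mul, dotProduct_mulVec, Matrix.smul_vecMul]
  have t2 : star v ⬝ᵥ (Q * B) *ᵥ v = μ * (star v ⬝ᵥ Q *ᵥ v) := by
    rw [← mulVec_mulVec, hBv, mulVec_smul]
    simp
  rw [add_mulVec, add_mulVec, dotProduct_add, dotProduct_add, t1, t2] at e0
  -- take real parts
  set p := star v ⬝ᵥ Q *ᵥ v with hp
  set m := star v ⬝ᵥ N *ᵥ v with hm
  have e1 : ((2 * μ.re : ℝ) : ℂ) * p = -m := by
    have : ((starRingEnd ℂ) μ + μ) * p = -m := by linear_combination e0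
    rw [← this]
    congr 1
    rw [add_comm]
    exact (Complex.add_conj μ).symm
  have e2 : 2 * μ.re * p.re = -m.re := by
    have := congrArg Complex.re e1
    simpa [Complex.re_ofReal_mul] using this
  have hpre : 0 < p.re := aux_re_dotProduct_pos P hP v hv
  have hmre : 0 < m.re := aux_re_dotProduct_pos M hM v hv
  nlinarith
end
end

section
/- If P solves the Lyapunov equation (A+BK_i)ᵀ P + P (A+BK_i) + Q + K_iᵀ R K_i = 0 and K_{i+1} = −R⁻¹ Bᵀ P, then along any trajectory of x' = Ax + Bu, the integral relation x(t)ᵀ P x(t) − x(t−T)ᵀ P x(t−T) = −∫_{t−T}^t x(τ)ᵀ(Q + K_iᵀ R K_i)x(τ) dτ − 2∫_{t−T}^t (u(τ) − K_i x(τ))ᵀ R K_{i+1} x(τ) dτ holds for all t and T > 0. -/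
open Matrix MeasureTheory Filter Topology intervalIntegral

attribute [local instance] Matrix.linftyOpNormedRing Matrix.linftyOpNormedAlgebra

noncomputable section

private lemma dot_swap' {p q : ℕ} (M : Matrix (Fin p) (Fin q) ℝ) (a : Fin p → ℝ) (b : Fin q → ℝ) :
    a ⬝ᵥ M *ᵥ b = b ⬝ᵥ Mᵀ *ᵥ a := by
  rw [dotProduct_mulVec, ← mulVec_transpose, dotProduct_comm]

private lemma cont_mulVec' {p q : ℕ} (M : Matrix (Fin p) (Fin q) ℝ) {b : ℝ → Fin q → ℝ}
    (hb : Continuous b) : Continuous fun τ => M *ᵥ b τ := by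
  refine continuous_pi fun i => ?_
  simp only [mulVec, dotProduct]
  exact continuous_finset_sum _ fun j _ => continuous_const.mul ((continuous_apply j).comp hb)

private lemma cont_dot' {p q : ℕ} (M : Matrix (Fin p) (Fin q) ℝ) {a : ℝ → Fin p → ℝ}
    {b : ℝ → Fin q → ℝ} (ha : Continuous a) (hb : Continuous b) :
    Continuous fun τ => a τ ⬝ᵥ M *ᵥ b τ := by
  simp only [dotProduct, mulVec]
  exact continuous_finset_sum _ fun i _ => ((continuous_apply i).comp ha).mul
    (continuous_finset_sum _ fun j _ => continuous_const.mul ((continuous_apply j).comp hb))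

theorem model_free_learning_equation {n m : ℕ}
    (A : Matrix (Fin n) (Fin n) ℝ) (B : Matrix (Fin n) (Fin m) ℝ)
    (Q : Matrix (Fin n) (Fin n) ℝ) (R : Matrix (Fin m) (Fin m) ℝ)
    (Ki Knext : Matrix (Fin m) (Fin n) ℝ)
    (P : Matrix (Fin n) (Fin n) ℝ) (hP : P.IsSymm)
    (hQ : Q.PosSemidef) (hR : R.PosDef)
    (hLyap : (A + B * Ki)ᵀ * P + P * (A + B * Ki) + Q + Kiᵀ * R * Ki = 0)
    (hKnext : Knext = -(R⁻¹ * Bᵀ * P))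
    (x : ℝ → Fin n → ℝ) (u : ℝ → Fin m → ℝ) (hu : Continuous u)
    (hx : ∀ t, HasDerivAt x (A.mulVec (x t) + B.mulVec (u t)) t) :
    ∀ t T : ℝ, 0 < T →
      x t ⬝ᵥ P.mulVec (x t) - x (t - T) ⬝ᵥ P.mulVec (x (t - T)) =
        -(∫ τ in (t - T)..t, x τ ⬝ᵥ (Q + Kiᵀ * R * Ki).mulVec (x τ)) -
          2 * ∫ τ in (t - T)..t,
            (u τ - Ki.mulVec (x τ)) ⬝ᵥ (R * Knext).mulVec (x τ) := by
  -- continuity of the trajectory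
  have hxc : Continuous x := continuous_iff_continuousAt.mpr fun τ => (hx τ).continuousAt
  -- the key pointwise algebraic identity
  have key : ∀ (v : Fin n → ℝ) (w : Fin m → ℝ),
      (A *ᵥ v + B *ᵥ w) ⬝ᵥ P *ᵥ v + v ⬝ᵥ P *ᵥ (A *ᵥ v + B *ᵥ w)
        = -(v ⬝ᵥ (Q + Kiᵀ * R * Ki) *ᵥ v) - 2 * ((w - Ki *ᵥ v) ⬝ᵥ (R * Knext) *ᵥ v) := by
    intro v w
    have hRK : R * Knext = -(Bᵀ * P) := by
      rw [hKnext, Matrix.mul_neg, Matrix.mul_assoc, ← Matrix.mul_assoc R R⁻¹,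
        Matrix.mul_nonsing_inv _ ((Matrix.isUnit_iff_isUnit_det R).mp hR.isUnit), Matrix.one_mul]
    have h0 : v ⬝ᵥ (((A + B * Ki)ᵀ * P + P * (A + B * Ki) + Q + Kiᵀ * R * Ki) *ᵥ v) = 0 := by
      rw [hLyap]; simp
    have e1 : (A *ᵥ v) ⬝ᵥ P *ᵥ v = v ⬝ᵥ (P * A) *ᵥ v := by
      rw [dot_swap', hP.eq, mulVec_mulVec]
    have e2 : (B *ᵥ w) ⬝ᵥ P *ᵥ v = w ⬝ᵥ (Bᵀ * P) *ᵥ v := by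
      rw [dot_swap', hP.eq, mulVec_mulVec, dot_swap', transpose_mul, hP.eq]
    have e3 : v ⬝ᵥ P *ᵥ (A *ᵥ v) = v ⬝ᵥ (P * A) *ᵥ v := by rw [mulVec_mulVec]
    have e4 : v ⬝ᵥ P *ᵥ (B *ᵥ w) = w ⬝ᵥ (Bᵀ * P) *ᵥ v := by
      rw [mulVec_mulVec, dot_swap', transpose_mul, hP.eq]
    have e5 : (Ki *ᵥ v) ⬝ᵥ (Bᵀ * P) *ᵥ v = v ⬝ᵥ (Kiᵀ * (Bᵀ * P)) *ᵥ v := by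
      rw [dot_swap', mulVec_mulVec, dot_swap', transpose_mul, transpose_transpose]
    have s1 : v ⬝ᵥ (Aᵀ * P) *ᵥ v = v ⬝ᵥ (P * A) *ᵥ v := by
      rw [dot_swap', transpose_mul, transpose_transpose, hP.eq]
    have s2 : v ⬝ᵥ (P * (B * Ki)) *ᵥ v = v ⬝ᵥ (Kiᵀ * (Bᵀ * P)) *ᵥ v := by
      rw [dot_swap', transpose_mul, transpose_mul, hP.eq, Matrix.mul_assoc]
    have h0' : v ⬝ᵥ (Aᵀ * P) *ᵥ v + v ⬝ᵥ (Kiᵀ * (Bᵀ * P)) *ᵥ v + v ⬝ᵥ (P * A) *ᵥ v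
        + v ⬝ᵥ (P * (B * Ki)) *ᵥ v + v ⬝ᵥ Q *ᵥ v + v ⬝ᵥ (Kiᵀ * (R * Ki)) *ᵥ v = 0 := by
      simpa [transpose_add, transpose_mul, Matrix.add_mul, Matrix.mul_add, add_mulVec,
        dotProduct_add, Matrix.mul_assoc, add_assoc] using h0
    rw [hRK]
    simp only [add_mulVec, mulVec_add, dotProduct_add, add_dotProduct, sub_dotProduct,
      neg_mulVec, dotProduct_neg, neg_dotProduct, e1, e2, e3, e4, e5, Matrix.mul_assoc]
    linarith [h0', s1, s2]
  -- derivative of the value function along the trajectory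
  have hV : ∀ τ : ℝ, HasDerivAt (fun s => x s ⬝ᵥ P.mulVec (x s))
      ((A.mulVec (x τ) + B.mulVec (u τ)) ⬝ᵥ P.mulVec (x τ) +
        x τ ⬝ᵥ P.mulVec (A.mulVec (x τ) + B.mulVec (u τ))) τ := by
    intro τ
    have hxi : ∀ i (s : ℝ), HasDerivAt (fun r => x r i)
        ((A.mulVec (x s) + B.mulVec (u s)) i) s := fun i s =>
      ((ContinuousLinearMap.proj (R := ℝ) (φ := fun _ : Fin n => ℝ) i).hasFDerivAt.comp_hasDerivAt
        s (hx s))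
    have h : HasDerivAt (fun s => ∑ i, x s i * ∑ j, P i j * x s j)
        (∑ i, (((A.mulVec (x τ) + B.mulVec (u τ)) i) * ∑ j, P i j * x τ j
          + x τ i * ∑ j, P i j * ((A.mulVec (x τ) + B.mulVec (u τ)) j))) τ := by
      apply HasDerivAt.fun_sum
      intro i _
      exact (hxi i τ).mul (HasDerivAt.fun_sum fun j _ => (hxi j τ).const_mul (P i j))
    have hfun : (fun s => x s ⬝ᵥ P.mulVec (x s))
        = fun s => ∑ i, x s i * ∑ j, P i j * x s j := by
      funext s; simp [dotProduct, mulVec]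
    rw [hfun]
    convert h using 1
    simp [dotProduct, mulVec, Finset.sum_add_distrib]
  -- rewritten derivative
  have hV' : ∀ τ : ℝ, HasDerivAt (fun s => x s ⬝ᵥ P.mulVec (x s))
      (-(x τ ⬝ᵥ (Q + Kiᵀ * R * Ki) *ᵥ x τ)
        - 2 * ((u τ - Ki *ᵥ x τ) ⬝ᵥ (R * Knext) *ᵥ x τ)) τ := by
    intro τ
    have := hV τ
    rwa [key (x τ) (u τ)] at this
  -- continuity of the two integrands
  have hf1 : Continuous fun τ => x τ ⬝ᵥ (Q + Kiᵀ * R * Ki) *ᵥ x τ := cont_dot' _ hxc hxc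
  have hf2 : Continuous fun τ => (u τ - Ki *ᵥ x τ) ⬝ᵥ (R * Knext) *ᵥ x τ :=
    cont_dot' _ (hu.sub (cont_mulVec' Ki hxc)) hxc
  intro t T hT
  have hint1 : IntervalIntegrable (fun τ => x τ ⬝ᵥ (Q + Kiᵀ * R * Ki) *ᵥ x τ)
      volume (t - T) t := hf1.intervalIntegrable _ _
  have hint2 : IntervalIntegrable (fun τ => (u τ - Ki *ᵥ x τ) ⬝ᵥ (R * Knext) *ᵥ x τ)
      volume (t - T) t := hf2.intervalIntegrable _ _
  have hFTC := intervalIntegral.integral_eq_sub_of_hasDerivAt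
    (a := t - T) (b := t) (f := fun s => x s ⬝ᵥ P.mulVec (x s)) (fun τ _ => hV' τ)
    ((hf1.neg.sub (continuous_const.mul hf2)).intervalIntegrable _ _)
  rw [intervalIntegral.integral_sub (hf1.fun_neg.intervalIntegrable _ _)
      ((continuous_const.fun_mul hf2).intervalIntegrable _ _),
    intervalIntegral.integral_neg, intervalIntegral.integral_const_mul] at hFTC
  linarith [hFTC]
end
end

section
/- Optimality of the Riccati solution among stabilizing gains: if P* is the stabilizing solution of the Riccati equation and K is any gain with A+BK Hurwitz with associated Lyapunov cost matrix P_K (solving (A+BK)ᵀ P_K + P_K (A+BK) + Q + Kᵀ R K = 0), then P* ≼ P_K in the Loewner order. -/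
open Matrix MeasureTheory Filter Topology intervalIntegral

open scoped Nat

attribute [local instance] Matrix.linftyOpNormedRing Matrix.linftyOpNormedAlgebra

noncomputable section

-- polynomial times decaying exponential
lemma poly_exp_decay (j : ℕ) {b : ℝ} (hb : b < 0) :
    Tendsto (fun k : ℕ => (k : ℝ) ^ j * Real.exp (b * k)) atTop (𝓝 0) := by
  have h1 : Tendsto (fun x : ℝ => x ^ j * Real.exp (-x)) atTop (𝓝 0) :=
    Real.tendsto_pow_mul_exp_neg_atTop_nhds_zero j
  have h2 : Tendsto (fun x : ℝ => (-b) * x) atTop atTop :=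
    Tendsto.const_mul_atTop (by linarith) tendsto_id
  have h3 := (h1.comp h2).const_mul ((-b) ^ j)⁻¹
  rw [mul_zero] at h3
  have h4 : Tendsto (fun x : ℝ => x ^ j * Real.exp (b * x)) atTop (𝓝 0) := by
    refine h3.congr fun x => ?_
    have hbn : (-b) ^ j ≠ 0 := pow_ne_zero _ (by linarith)
    field_simp [Function.comp, mul_pow]
    ring_nf
    simp only [Function.comp_apply, neg_neg]
    rw [show -(b * x) = (-1) * b * x by ring, mul_pow, mul_pow]
    ring
  exact h4.comp tendsto_natCast_atTop_atTop

lemma real_smul_matC {n : ℕ} (r : ℝ) (X : Matrix (Fin n) (Fin n) ℂ) :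
    r • X = (r : ℂ) • X := by
  ext i j; simp [Matrix.smul_apply, Complex.real_smul]

lemma exp_scalar_matrix {n : ℕ} (c : ℂ) :
    NormedSpace.exp (c • (1 : Matrix (Fin n) (Fin n) ℂ)) = Complex.exp c • 1 := by
  have h1 : c • (1 : Matrix (Fin n) (Fin n) ℂ) = algebraMap ℂ _ c :=
    (Algebra.algebraMap_eq_smul_one c).symm
  rw [h1]
  erw [← NormedSpace.map_exp (algebraMap ℂ (Matrix (Fin n) (Fin n) ℂ))
      (continuous_algebraMap _ _)]
  rw [← Complex.exp_eq_exp_ℂ]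
  exact Algebra.algebraMap_eq_smul_one _

lemma gen_eig_decay {n : ℕ} (M : Matrix (Fin n) (Fin n) ℂ) (μ : ℂ) (hμ : μ.re < 0)
    (v : Fin n → ℂ) (q : ℕ) (hv : ((M - μ • 1) ^ q) *ᵥ v = 0) :
    Tendsto (fun k : ℕ => NormedSpace.exp ((k : ℝ) • M) *ᵥ v) atTop (𝓝 0) := by
  set N : Matrix (Fin n) (Fin n) ℂ := M - μ • 1 with hN
  have hsplit : ∀ k : ℕ, NormedSpace.exp ((k : ℝ) • M)
      = Complex.exp ((k : ℂ) * μ) • NormedSpace.exp ((k : ℝ) • N) := by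
    intro k
    have hdec : (k : ℝ) • M = ((k : ℂ) * μ) • (1 : Matrix (Fin n) (Fin n) ℂ) + (k : ℝ) • N := by
      rw [real_smul_matC, real_smul_matC]
      have : M = μ • 1 + N := by simp [hN]
      rw [this, smul_add, smul_smul]
      norm_cast
    have hcomm : Commute (((k : ℂ) * μ) • (1 : Matrix (Fin n) (Fin n) ℂ)) ((k : ℝ) • N) :=
      ((Commute.one_left ((k : ℝ) • N)).smul_left _)
    rw [hdec, Matrix.exp_add_of_commute _ _ hcomm, exp_scalar_matrix, smul_mul_assoc, one_mul]
  -- finite sum expression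
  have hvj : ∀ j, q ≤ j → (N ^ j) *ᵥ v = 0 := by
    intro j hj
    have : N ^ j = N ^ (j - q) * N ^ q := by rw [← pow_add]; congr 1; omega
    rw [this, ← Matrix.mulVec_mulVec, hv, Matrix.mulVec_zero]
  have hfin : ∀ k : ℕ, NormedSpace.exp ((k : ℝ) • N) *ᵥ v
      = ∑ j ∈ Finset.range q, ((j ! : ℝ)⁻¹ * (k : ℝ) ^ j) • (N ^ j *ᵥ v) := by
    intro k
    let ℓ : Matrix (Fin n) (Fin n) ℂ →ₗ[ℝ] (Fin n → ℂ) :=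
      { toFun := fun X => X *ᵥ v
        map_add' := fun X Y => Matrix.add_mulVec X Y v
        map_smul' := fun c X => by simp [Matrix.smul_mulVec] }
    have hsum : Summable fun j : ℕ => (j ! : ℝ)⁻¹ • ((k : ℝ) • N) ^ j :=
      NormedSpace.expSeries_summable' (𝕂 := ℝ) ((k : ℝ) • N)
    have h1 : NormedSpace.exp ((k : ℝ) • N) *ᵥ v
        = ∑' j : ℕ, (j ! : ℝ)⁻¹ • (((k : ℝ) • N) ^ j *ᵥ v) := by
      rw [NormedSpace.exp_eq_tsum ℝ]
      have h2 := (LinearMap.toContinuousLinearMap ℓ).map_tsum hsum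
      simpa [ℓ, LinearMap.coe_toContinuousLinearMap'] using h2
    rw [h1]
    rw [tsum_eq_sum (s := Finset.range q) ?_]
    · refine Finset.sum_congr rfl fun j hj => ?_
      rw [smul_pow, Matrix.smul_mulVec, smul_comm, smul_smul, mul_comm]
    · intro j hj
      rw [smul_pow, Matrix.smul_mulVec,
        hvj j (by simpa using hj)]
      simp
  -- squeeze
  rw [tendsto_zero_iff_norm_tendsto_zero]
  refine squeeze_zero (fun k => norm_nonneg _)
    (g := fun k : ℕ => ∑ j ∈ Finset.range q,
      ((j ! : ℝ)⁻¹ * ‖N ^ j *ᵥ v‖) * ((k : ℝ) ^ j * Real.exp (μ.re * k))) ?_ ?_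
  · intro k
    rw [hsplit k, Matrix.smul_mulVec, norm_smul, hfin k]
    have hnorm : ‖Complex.exp ((k : ℂ) * μ)‖ = Real.exp (μ.re * k) := by
      rw [Complex.norm_exp]
      congr 1
      simp [Complex.mul_re, mul_comm]
    rw [hnorm]
    calc Real.exp (μ.re * k) * ‖∑ j ∈ Finset.range q,
          ((j ! : ℝ)⁻¹ * (k : ℝ) ^ j) • (N ^ j *ᵥ v)‖
        ≤ Real.exp (μ.re * k) * ∑ j ∈ Finset.range q,
          ((j ! : ℝ)⁻¹ * (k : ℝ) ^ j) * ‖N ^ j *ᵥ v‖ := by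
          refine mul_le_mul_of_nonneg_left ?_ (Real.exp_nonneg _)
          refine (norm_sum_le _ _).trans (le_of_eq ?_)
          refine Finset.sum_congr rfl fun j hj => ?_
          rw [norm_smul]
          congr 1
          rw [Real.norm_eq_abs, abs_of_nonneg]
          positivity
      _ = ∑ j ∈ Finset.range q,
          ((j ! : ℝ)⁻¹ * ‖N ^ j *ᵥ v‖) * ((k : ℝ) ^ j * Real.exp (μ.re * k)) := by
          rw [Finset.mul_sum]
          refine Finset.sum_congr rfl fun j hj => by ring
  · have : Tendsto (fun k : ℕ => (0 : ℝ)) atTop (𝓝 0) := tendsto_const_nhds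
    have h0 : ∑ j ∈ Finset.range q, (0 : ℝ) = 0 := by simp
    rw [← h0]
    refine tendsto_finset_sum _ fun j hj => ?_
    simpa using (poly_exp_decay j hμ).const_mul ((j ! : ℝ)⁻¹ * ‖N ^ j *ᵥ v‖)

lemma hurwitz_exp_decay {n : ℕ} (M : Matrix (Fin n) (Fin n) ℂ)
    (hM : ∀ μ ∈ spectrum ℂ M, μ.re < 0) :
    Tendsto (fun k : ℕ => NormedSpace.exp ((k : ℝ) • M)) atTop (𝓝 0) := by
  have hvec : ∀ v : Fin n → ℂ,
      Tendsto (fun k : ℕ => NormedSpace.exp ((k : ℝ) • M) *ᵥ v) atTop (𝓝 0) := by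
    let S : Submodule ℂ (Fin n → ℂ) :=
      { carrier := {v | Tendsto (fun k : ℕ => NormedSpace.exp ((k : ℝ) • M) *ᵥ v) atTop (𝓝 0)}
        add_mem' := fun {x y} hx hy => by
          have := hx.add hy
          simpa [Matrix.mulVec_add] using this
        zero_mem' := by
          simp only [Set.mem_setOf_eq, Matrix.mulVec_zero]
          exact tendsto_const_nhds
        smul_mem' := fun c x hx => by
          have := hx.const_smul c
          simpa [Matrix.mulVec_smul] using this }
    have htop : ⊤ ≤ S := by
      rw [← Module.End.iSup_maxGenEigenspace_eq_top (Matrix.toLinAlgEquiv' M)]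
      refine iSup_le fun μ => fun v hv => ?_
      rcases (Module.End.mem_maxGenEigenspace _ _ _).1 hv with ⟨q, hq⟩
      by_cases hv0 : v = 0
      · subst hv0; exact S.zero_mem
      · have hmap : Matrix.toLinAlgEquiv' ((M - μ • 1) ^ q)
            = (Matrix.toLinAlgEquiv' M - μ • 1) ^ q := by
          simp only [map_pow, map_sub, _root_.map_smul, _root_.map_one]
        have hgen : ((M - μ • 1) ^ q) *ᵥ v = 0 := by
          have h := congrArg (fun f => f v) hmap
          simp only [Matrix.toLinAlgEquiv'_apply] at h
          exact h.trans hq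
        have hμ : μ.re < 0 := by
          apply hM
          have hEig : Module.End.HasEigenvalue (Matrix.toLinAlgEquiv' M) μ := by
            refine Module.End.hasEigenvalue_of_hasGenEigenvalue (k := q) fun hbot => hv0 ?_
            have hvmem : v ∈ Module.End.genEigenspace (Matrix.toLinAlgEquiv' M) μ (q : ℕ∞) :=
              Module.End.mem_genEigenspace_nat.2 hq
            rw [hbot] at hvmem
            simpa using hvmem
          have := Module.End.hasEigenvalue_iff_mem_spectrum.1 hEig
          rwa [AlgEquiv.spectrum_eq Matrix.toLinAlgEquiv' M] at this
        exact gen_eig_decay M μ hμ v q hgen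
    intro v; exact htop Submodule.mem_top
  -- from vectors to the matrix
  refine tendsto_zero_iff_norm_tendsto_zero.2 ?_
  refine squeeze_zero (fun k => norm_nonneg _)
    (g := fun k : ℕ => ∑ i : Fin n, ∑ j : Fin n,
      ‖NormedSpace.exp ((k : ℝ) • M) *ᵥ Pi.single j 1‖) ?_ ?_
  · intro k
    set X := NormedSpace.exp ((k : ℝ) • M) with hX
    have h1 : ‖X‖ ≤ ∑ i : Fin n, ∑ j : Fin n, ‖X i j‖ := by
      rw [Matrix.linfty_opNorm_def]
      have h2 : (Finset.univ.sup fun i : Fin n => ∑ j : Fin n, ‖X i j‖₊)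
          ≤ ∑ i : Fin n, ∑ j : Fin n, ‖X i j‖₊ :=
        Finset.sup_le fun i _ => Finset.single_le_sum
          (f := fun i : Fin n => ∑ j : Fin n, ‖X i j‖₊) (fun i _ => zero_le) (Finset.mem_univ i)
      calc ((Finset.univ.sup fun i : Fin n => ∑ j : Fin n, ‖X i j‖₊ : NNReal) : ℝ)
          ≤ ((∑ i : Fin n, ∑ j : Fin n, ‖X i j‖₊ : NNReal) : ℝ) := NNReal.coe_le_coe.2 h2
        _ = ∑ i : Fin n, ∑ j : Fin n, ‖X i j‖ := by push_cast; rfl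
    refine h1.trans (Finset.sum_le_sum fun i _ => Finset.sum_le_sum fun j _ => ?_)
    have hcol : X *ᵥ Pi.single j 1 = fun i' => X i' j := by
      funext i'
      simp [Matrix.mulVec_single]
    calc ‖X i j‖ = ‖(X *ᵥ Pi.single j 1) i‖ := by rw [hcol]
      _ ≤ ‖X *ᵥ Pi.single j 1‖ := norm_le_pi_norm _ i
  · have h0 : (0 : ℝ) = ∑ i : Fin n, ∑ j : Fin n, (0 : ℝ) := by simp
    rw [h0]
    refine tendsto_finset_sum _ fun i _ => tendsto_finset_sum _ fun j _ => ?_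
    simpa using (hvec (Pi.single j 1)).norm

lemma norm_map_ofReal {n : ℕ} (Y : Matrix (Fin n) (Fin n) ℝ) :
    ‖Y.map Complex.ofReal‖ = ‖Y‖ := by
  rw [Matrix.linfty_opNorm_def, Matrix.linfty_opNorm_def]
  congr 1
  refine Finset.sup_congr rfl fun i _ => ?_
  refine Finset.sum_congr rfl fun j _ => ?_
  simp [Matrix.map_apply]

lemma map_ofReal_exp {n : ℕ} (X : Matrix (Fin n) (Fin n) ℝ) :
    (NormedSpace.exp X).map Complex.ofReal = NormedSpace.exp (X.map Complex.ofReal) := by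
  let L : Matrix (Fin n) (Fin n) ℝ →ₗ[ℝ] Matrix (Fin n) (Fin n) ℂ :=
    { toFun := fun X => X.map Complex.ofReal
      map_add' := fun X Y => by ext i j; simp [Matrix.map_apply]
      map_smul' := fun c X => by ext i j; simp [Matrix.map_apply] }
  have hcont : Continuous (fun X : Matrix (Fin n) (Fin n) ℝ => X.map Complex.ofReal) :=
    L.continuous_of_finiteDimensional
  have := NormedSpace.map_exp (Complex.ofRealHom.mapMatrix :
    Matrix (Fin n) (Fin n) ℝ →+* Matrix (Fin n) (Fin n) ℂ)
    (by exact hcont) X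
  exact this

lemma hurwitz_exp_decay_real {n : ℕ} (C : Matrix (Fin n) (Fin n) ℝ) (hC : Hurwitz C) :
    Tendsto (fun k : ℕ => NormedSpace.exp ((k : ℝ) • C)) atTop (𝓝 0) := by
  have hmap : ∀ k : ℕ, (NormedSpace.exp ((k : ℝ) • C)).map Complex.ofReal
      = NormedSpace.exp ((k : ℝ) • C.map Complex.ofReal) := by
    intro k
    rw [map_ofReal_exp]
    congr 1
    ext i j
    simp [Matrix.map_apply]
  refine tendsto_zero_iff_norm_tendsto_zero.2 ?_
  have hC' := hurwitz_exp_decay (C.map Complex.ofReal) hC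
  replace hC' := tendsto_zero_iff_norm_tendsto_zero.1 hC'
  refine hC'.congr fun k => ?_
  rw [← hmap k, norm_map_ofReal]

lemma lyapunov_psd {n : ℕ} (C : Matrix (Fin n) (Fin n) ℝ) (hC : Hurwitz C)
    (Δ S : Matrix (Fin n) (Fin n) ℝ) (hS : S.PosSemidef)
    (hLyap : Cᵀ * Δ + Δ * C = -S) : Δ.PosSemidef := by
  set E : ℝ → Matrix (Fin n) (Fin n) ℝ := fun t => NormedSpace.exp (t • C) with hEdef
  have hE : ∀ t : ℝ, HasDerivAt E (C * E t) t := fun t => hasDerivAt_exp_smul_const' C t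
  -- transpose as a continuous linear map
  let T : Matrix (Fin n) (Fin n) ℝ →ₗ[ℝ] Matrix (Fin n) (Fin n) ℝ :=
    { toFun := fun X => Xᵀ
      map_add' := fun X Y => Matrix.transpose_add X Y
      map_smul' := fun c X => Matrix.transpose_smul c X }
  let Tc := LinearMap.toContinuousLinearMap T
  have hET : ∀ t : ℝ, HasDerivAt (fun t => (E t)ᵀ) ((C * E t)ᵀ) t := fun t =>
    (Tc.hasFDerivAt.comp_hasDerivAt t (hE t) :)
  -- derivative of the quadratic matrix function against a general matrix Z
  have hFgen : ∀ (Z : Matrix (Fin n) (Fin n) ℝ) (t : ℝ),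
      HasDerivAt (fun t => (E t)ᵀ * Z * E t)
        ((E t)ᵀ * (Cᵀ * Z + Z * C) * E t) t := by
    intro Z t
    have h1 : HasDerivAt (fun t => (E t)ᵀ * Z) ((C * E t)ᵀ * Z) t := (hET t).mul_const Z
    have h2 := h1.mul (hE t)
    refine h2.congr_deriv ?_
    rw [Matrix.transpose_mul]
    noncomm_ring
  have hEtend : Tendsto (fun k : ℕ => E (k : ℝ)) atTop (𝓝 0) := hurwitz_exp_decay_real C hC
  have hTtend : Tendsto (fun k : ℕ => (E (k : ℝ))ᵀ) atTop (𝓝 0) := by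
    have := (Tc.continuous.tendsto 0).comp hEtend
    simpa [Tc, T, Function.comp_def] using this
  have hFtend : ∀ Z : Matrix (Fin n) (Fin n) ℝ,
      Tendsto (fun k : ℕ => (E (k : ℝ))ᵀ * Z * E (k : ℝ)) atTop (𝓝 0) := by
    intro Z
    have := (hTtend.mul (tendsto_const_nhds (x := Z))).mul hEtend
    simpa using this
  have hE0 : E 0 = 1 := by simp [hEdef, NormedSpace.exp_zero]
  -- Hermitian-ness
  have hSsymm : Sᵀ = S := by
    have h : Sᴴ = S := hS.1
    rwa [Matrix.conjTranspose_eq_transpose_of_trivial] at h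
  have hLyapT : Cᵀ * Δᵀ + Δᵀ * C = -S := by
    have h := congrArg Matrix.transpose hLyap
    rw [Matrix.transpose_add, Matrix.transpose_mul, Matrix.transpose_mul,
      Matrix.transpose_transpose, Matrix.transpose_neg, hSsymm, add_comm] at h
    exact h
  have hYeq : Cᵀ * (Δ - Δᵀ) + (Δ - Δᵀ) * C = 0 := by
    rw [Matrix.mul_sub, Matrix.sub_mul]
    rw [show Cᵀ * Δ - Cᵀ * Δᵀ + (Δ * C - Δᵀ * C)
      = (Cᵀ * Δ + Δ * C) - (Cᵀ * Δᵀ + Δᵀ * C) by noncomm_ring, hLyap, hLyapT]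
    simp
  have hHconst : ∀ t : ℝ, (E t)ᵀ * (Δ - Δᵀ) * E t = (Δ - Δᵀ) := by
    have hH0 : ∀ t : ℝ, HasDerivAt (fun t => (E t)ᵀ * (Δ - Δᵀ) * E t) 0 t := by
      intro t
      have := hFgen (Δ - Δᵀ) t
      rwa [hYeq, Matrix.mul_zero, Matrix.zero_mul] at this
    have hdiff : Differentiable ℝ (fun t => (E t)ᵀ * (Δ - Δᵀ) * E t) :=
      fun t => (hH0 t).differentiableAt
    have hfd : ∀ t : ℝ, fderiv ℝ (fun t => (E t)ᵀ * (Δ - Δᵀ) * E t) t = 0 := by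
      intro t
      rw [(hH0 t).hasFDerivAt.fderiv]
      ext u
      simp
    intro t
    have := is_const_of_fderiv_eq_zero hdiff hfd t 0
    rw [this, hE0]
    simp
  have hYzero : Δ - Δᵀ = 0 := by
    have h1 : Tendsto (fun k : ℕ => (E (k : ℝ))ᵀ * (Δ - Δᵀ) * E (k : ℝ)) atTop (𝓝 0) :=
      hFtend (Δ - Δᵀ)
    have h2 : (fun k : ℕ => (E (k : ℝ))ᵀ * (Δ - Δᵀ) * E (k : ℝ))
        = fun _ : ℕ => (Δ - Δᵀ) := funext fun k => hHconst _
    rw [h2] at h1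
    exact (tendsto_nhds_unique tendsto_const_nhds h1)
  have hherm : Δ.IsHermitian := by
    show Δᴴ = Δ
    rw [Matrix.conjTranspose_eq_transpose_of_trivial]
    exact (sub_eq_zero.mp hYzero).symm
  refine Matrix.PosSemidef.of_dotProduct_mulVec_nonneg hherm fun v => ?_
  -- quadratic form functional
  let phi : Matrix (Fin n) (Fin n) ℝ →ₗ[ℝ] ℝ :=
    { toFun := fun X => v ⬝ᵥ (X *ᵥ v)
      map_add' := fun X Y => by simp [Matrix.add_mulVec, dotProduct_add]
      map_smul' := fun c X => by simp [Matrix.smul_mulVec] }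
  let phic := LinearMap.toContinuousLinearMap phi
  set g : ℝ → ℝ := fun t => phic ((E t)ᵀ * Δ * E t) with hgdef
  have hg : ∀ t : ℝ, HasDerivAt g (phic ((E t)ᵀ * (Cᵀ * Δ + Δ * C) * E t)) t := fun t =>
    (phic.hasFDerivAt.comp_hasDerivAt t (hFgen Δ t) :)
  have hgderiv : ∀ t : ℝ, deriv g t ≤ 0 := by
    intro t
    rw [(hg t).deriv, hLyap]
    have : (E t)ᵀ * -S * E t = -((E t)ᵀ * S * E t) := by noncomm_ring
    rw [this, map_neg, neg_nonpos]
    show (0 : ℝ) ≤ v ⬝ᵥ (((E t)ᵀ * S * E t) *ᵥ v)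
    have hrw : v ⬝ᵥ (((E t)ᵀ * S * E t) *ᵥ v)
        = (E t *ᵥ v) ⬝ᵥ (S *ᵥ (E t *ᵥ v)) := by
      rw [← Matrix.mulVec_mulVec, ← Matrix.mulVec_mulVec,
        Matrix.dotProduct_mulVec v (E t)ᵀ, Matrix.vecMul_transpose]
    rw [hrw]
    simpa using hS.dotProduct_mulVec_nonneg (E t *ᵥ v)
  have hmono : AntitoneOn g (Set.Ici (0 : ℝ)) := by
    refine antitoneOn_of_deriv_nonpos (convex_Ici 0)
      (fun t _ => ((hg t).differentiableAt.continuousAt.continuousWithinAt))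
      (fun x _ => (hg x).differentiableAt.differentiableWithinAt)
      (fun x _ => hgderiv x)
  have hgle : ∀ k : ℕ, g (k : ℝ) ≤ g 0 :=
    fun k => hmono (Set.self_mem_Ici) (Set.mem_Ici.2 (Nat.cast_nonneg k)) (Nat.cast_nonneg k)
  have hgtend : Tendsto (fun k : ℕ => g (k : ℝ)) atTop (𝓝 0) := by
    have := (phic.continuous.tendsto 0).comp (hFtend Δ)
    simpa [hgdef, Function.comp_def, map_zero] using this
  have hg0 : 0 ≤ g 0 := le_of_tendsto hgtend (Filter.Eventually.of_forall hgle)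
  have : g 0 = v ⬝ᵥ (Δ *ᵥ v) := by
    rw [hgdef]
    simp only [hE0, Matrix.transpose_one, Matrix.one_mul, Matrix.mul_one]
    rfl
  rw [this] at hg0
  simpa using hg0

theorem riccati_solution_optimal {n m : ℕ}
    (A : Matrix (Fin n) (Fin n) ℝ) (B : Matrix (Fin n) (Fin m) ℝ)
    (Q : Matrix (Fin n) (Fin n) ℝ) (R : Matrix (Fin m) (Fin m) ℝ)
    (Pstar : Matrix (Fin n) (Fin n) ℝ)
    (hQ : Q.PosSemidef) (hR : R.PosDef) (hPs : Pstar.PosSemidef)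
    (hARE : Aᵀ * Pstar + Pstar * A - Pstar * B * R⁻¹ * Bᵀ * Pstar + Q = 0)
    (hstab : Hurwitz (A - B * (R⁻¹ * Bᵀ * Pstar)))
    (K : Matrix (Fin m) (Fin n) ℝ) (PK : Matrix (Fin n) (Fin n) ℝ)
    (hKH : Hurwitz (A + B * K))
    (hPK : (A + B * K)ᵀ * PK + PK * (A + B * K) + Q + Kᵀ * R * K = 0) :
    (PK - Pstar).PosSemidef := by
  have hPT : Pstarᵀ = Pstar := by
    have h : Pstarᴴ = Pstar := hPs.1
    rwa [Matrix.conjTranspose_eq_transpose_of_trivial] at h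
  have hRT : Rᵀ = R := by
    have h : Rᴴ = R := hR.1
    rwa [Matrix.conjTranspose_eq_transpose_of_trivial] at h
  have hRinvT : (R⁻¹)ᵀ = R⁻¹ := by
    rw [Matrix.transpose_nonsing_inv, hRT]
  have hdet : IsUnit R.det := isUnit_iff_ne_zero.2 hR.det_pos.ne'
  have hcan : ∀ X : Matrix (Fin m) (Fin n) ℝ, R * (R⁻¹ * X) = X := fun X => by
    rw [← Matrix.mul_assoc, Matrix.mul_nonsing_inv R hdet, Matrix.one_mul]
  have hcan2 : ∀ X : Matrix (Fin m) (Fin n) ℝ, R⁻¹ * (R * X) = X := fun X => by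
    rw [← Matrix.mul_assoc, Matrix.nonsing_inv_mul R hdet, Matrix.one_mul]
  set C : Matrix (Fin n) (Fin n) ℝ := A + B * K with hC
  set W : Matrix (Fin m) (Fin n) ℝ := K + R⁻¹ * Bᵀ * Pstar with hW
  set S : Matrix (Fin n) (Fin n) ℝ := Wᵀ * R * W with hS
  have hSpsd : S.PosSemidef := by
    have h := hR.posSemidef.conjTranspose_mul_mul_same W
    rwa [Matrix.conjTranspose_eq_transpose_of_trivial] at h
  have expand : Cᵀ * (PK - Pstar) + (PK - Pstar) * C + S
      = ((A + B * K)ᵀ * PK + PK * (A + B * K) + Q + Kᵀ * R * K)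
        - (Aᵀ * Pstar + Pstar * A - Pstar * B * R⁻¹ * Bᵀ * Pstar + Q) := by
    simp only [hS, hW, hC, Matrix.transpose_add, Matrix.transpose_mul,
      Matrix.transpose_transpose, hPT, hRT, hRinvT,
      Matrix.add_mul, Matrix.mul_add, Matrix.sub_mul, Matrix.mul_sub, Matrix.mul_assoc,
      hcan, hcan2]
    abel
  have key : Cᵀ * (PK - Pstar) + (PK - Pstar) * C = -S := by
    have h0 : Cᵀ * (PK - Pstar) + (PK - Pstar) * C + S = 0 := by
      rw [expand, hPK, hARE, sub_zero]
    exact eq_neg_of_add_eq_zero_left h0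
  exact lyapunov_psd C hKH (PK - Pstar) S hSpsd key
end
end

section
/- For the scalar case n = m = 1 with a, b, q, r real, b ≠ 0, q > 0, r > 0, the Kleinman iteration p_{i+1} determined by 2(a + b k_i) p_i + q + r k_i² = 0, k_{i+1} = −b p_i / r, starting from any k₀ with a + b k₀ < 0, converges to p* = (a r + r√(a² + b² q / r)) / b², the positive root of the scalar Riccati equation 2 a p − b² p² / r + q = 0. -/
open Matrix MeasureTheory Filter Topology intervalIntegral

attribute [local instance] Matrix.linftyOpNormedRing Matrix.linftyOpNormedAlgebra

noncomputable section

set_option maxHeartbeats 1000000 in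
theorem scalar_kleinman_converges
    (a b q r : ℝ) (hb : b ≠ 0) (hq : 0 < q) (hr : 0 < r)
    (k p : ℕ → ℝ) (hk0 : a + b * k 0 < 0)
    (hLyap : ∀ i, 2 * (a + b * k i) * p i + q + r * (k i) ^ 2 = 0)
    (hKrec : ∀ i, k (i + 1) = -(b * p i) / r) :
    Tendsto p atTop
      (nhds ((a + Real.sqrt (a ^ 2 + b ^ 2 * q / r)) * r / b ^ 2)) := by
  set s := Real.sqrt (a ^ 2 + b ^ 2 * q / r) with hs_def
  have hb2 : (0:ℝ) < b ^ 2 := by positivity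
  have harg : (0:ℝ) < a ^ 2 + b ^ 2 * q / r := by positivity
  have hs2 : s ^ 2 = a ^ 2 + b ^ 2 * q / r := Real.sq_sqrt harg.le
  have hs_pos : 0 < s := Real.sqrt_pos.mpr harg
  have hs2r : s ^ 2 * r = a ^ 2 * r + b ^ 2 * q := by
    rw [hs2]; field_simp
  have ha2s2 : a ^ 2 < s ^ 2 := by
    nlinarith [mul_pos hq hb2]
  have hsa : |a| < s := by
    nlinarith [sq_abs a, abs_nonneg a, hs_pos]
  have has : a - s < 0 := by
    linarith [le_abs_self a]
  set P : ℝ := (a + s) * r / b ^ 2 with hP_def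
  have hbP : P * b ^ 2 = (a + s) * r := by
    rw [hP_def]; field_simp
  -- key lemma: closed-loop stable at step i implies P ≤ p i
  have key : ∀ i, a + b * k i < 0 → P ≤ p i := by
    intro i hc
    have hL := hLyap i
    have hp_pos : 0 < p i := by
      nlinarith [mul_nonneg hr.le (sq_nonneg (k i))]
    have hid : (p i * b ^ 2 - (a + s) * r) * (p i * b ^ 2 - (a - s) * r)
        = b ^ 2 * (r * k i + b * p i) ^ 2 := by
      linear_combination (-(b ^ 2 * r)) * hL + (-r) * hs2r
    have hfac2 : 0 < p i * b ^ 2 - (a - s) * r := by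
      nlinarith [mul_pos hp_pos hb2, mul_pos hr (neg_pos.mpr has)]
    have hfac1 : 0 ≤ p i * b ^ 2 - (a + s) * r := by
      nlinarith [hid, mul_nonneg hb2.le (sq_nonneg (r * k i + b * p i))]
    rw [hP_def, div_le_iff₀ hb2]
    linarith
  -- closed-loop stability for all i
  have stab : ∀ i, a + b * k i < 0 := by
    intro i
    induction i with
    | zero => exact hk0
    | succ n ih =>
      have hpn := key n ih
      have h1 : (a + s) * r ≤ p n * b ^ 2 := by
        rw [hP_def, div_le_iff₀ hb2] at hpn; linarith
      rw [hKrec]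
      have heq : a + b * (-(b * p n) / r) = (a * r - b ^ 2 * p n) / r := by
        field_simp; ring
      rw [heq]
      exact div_neg_of_neg_of_pos (by nlinarith [mul_pos hs_pos hr]) hr
  have hPle : ∀ i, P ≤ p i := fun i => key i (stab i)
  -- monotone decreasing
  have hK' : ∀ i, r * k (i + 1) + b * p i = 0 := by
    intro i; rw [hKrec]; field_simp; ring
  have hmono : ∀ i, p (i + 1) ≤ p i := by
    intro i
    have hid : 2 * (a + b * k (i+1)) * (p i - p (i+1)) + r * (k (i+1) - k i) ^ 2 = 0 := by
      linear_combination hLyap i - hLyap (i+1) + 2 * (k (i+1) - k i) * hK' i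
    nlinarith [stab (i+1), mul_nonneg hr.le (sq_nonneg (k (i+1) - k i))]
  have hanti : Antitone p := antitone_nat_of_succ_le hmono
  have hbdd : BddBelow (Set.range p) := ⟨P, by rintro x ⟨i, rfl⟩; exact hPle i⟩
  set L : ℝ := ⨅ i, p i with hL_def
  have htend : Tendsto p atTop (𝓝 L) := tendsto_atTop_ciInf hanti hbdd
  have hPL : P ≤ L := le_ciInf hPle
  have hsub : Tendsto (fun i => p (i + 1)) atTop (𝓝 L) :=
    htend.comp (tendsto_add_atTop_nat 1)
  set K : ℝ := -(b * L) / r with hK_def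
  have hmK : r * K + b * L = 0 := by rw [hK_def]; field_simp; ring
  have hkl : Tendsto (fun i => k (i + 1)) atTop (𝓝 K) := by
    simp only [hKrec, hK_def]
    exact ((tendsto_const_nhds.mul htend).neg).div_const r
  have hFeq : 2 * (a + b * K) * L + q + r * K ^ 2 = 0 := by
    have h1 : Tendsto (fun i => 2 * (a + b * k (i+1)) * p (i+1) + q + r * (k (i+1)) ^ 2)
        atTop (𝓝 (2 * (a + b * K) * L + q + r * K ^ 2)) :=
      (((tendsto_const_nhds.mul
        (tendsto_const_nhds.add (tendsto_const_nhds.mul hkl))).mul hsub).add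
        tendsto_const_nhds).add (tendsto_const_nhds.mul (hkl.pow 2))
    have h2 : Tendsto (fun i => 2 * (a + b * k (i+1)) * p (i+1) + q + r * (k (i+1)) ^ 2)
        atTop (𝓝 0) := by
      simp only [hLyap]; exact tendsto_const_nhds
    exact tendsto_nhds_unique h1 h2
  have hRic : 2 * a * L * r - b ^ 2 * L ^ 2 + q * r = 0 := by
    linear_combination r * hFeq - (r * K + b * L) * hmK
  have hfP2 : (2 * a * P * r - b ^ 2 * P ^ 2 + q * r) * b ^ 2 = 0 := by
    linear_combination (-(P * b ^ 2 - (a - s) * r)) * hbP - r * hs2r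
  have hfP : 2 * a * P * r - b ^ 2 * P ^ 2 + q * r = 0 := by
    rcases mul_eq_zero.mp hfP2 with h | h
    · exact h
    · exact absurd h hb2.ne'
  have hdiff : (L - P) * (2 * a * r - b ^ 2 * (L + P)) = 0 := by
    linear_combination hRic - hfP
  have hlt : 2 * a * r - b ^ 2 * (L + P) < 0 := by
    nlinarith [mul_nonneg hb2.le (sub_nonneg.mpr hPL), mul_pos hs_pos hr, hbP]
  have hLP : L = P := by
    have h1 : L ≤ P := by nlinarith [hdiff, hlt]
    exact le_antisymm h1 hPL
  rwa [hLP] at htend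
end
end
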